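/- arXiv:1504.04467 — 4 statements merged into one kernel-verified Lean document; each statement's English description precedes it below -/
import Mathlib

section
/- For every natural number n ≥ 1, C_n = ∫_2^{p_n} π(x) dx, where the integral is over the real interval [2, p_n]. -/
open Filter Asymptotics

/-- `nthPrime n` is the `n`-th prime number, with `nthPrime 1 = 2`. -/
noncomputable def nthPrime (n : ℕ) : ℕ := Nat.nth Nat.Prime (n - 1)

/-- `Cseq n = n * p_n - ∑_{k ≤ n} p_k`. -/
noncomputable def Cseq (n : ℕ) : ℝ := n * nthPrime n - ∑ k ∈ Finset.Icc 1 n, (nthPrime k : ℝ)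

/-- `primePi x` is the number of primes not exceeding the real number `x`. -/
noncomputable def primePi (x : ℝ) : ℕ := Nat.primeCounting ⌊x⌋₊

/-- `li x = ∫_2^x dt / log t`. -/
noncomputable def li (x : ℝ) : ℝ := ∫ t in (2:ℝ)..x, 1 / Real.log t

/-!
`π` is the step function equal to `n` on `[p_n, p_{n+1})`, so its integral over `[p_n, p_{n+1}]`
is `n (p_{n+1} - p_n)`, which is exactly the increment `C_{n+1} - C_n`. Summing these increments
starts from `C_0 = 0`: the truncated subtraction in `nthPrime` makes `p_0 = 2`, so the case
`n = 0` is the empty integral.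
-/

theorem Nat.primeCounting_eq_succ_of_nth_le_of_lt {k m : ℕ} (hk : nth Nat.Prime k ≤ m)
    (hm : m < nth Nat.Prime (k + 1)) : primeCounting m = k + 1 :=
  le_antisymm ((count_le_iff_le_nth infinite_setOfPred_prime).2 hm)
    ((lt_nth_iff_count_lt infinite_setOfPred_prime).2 (lt_succ_of_le hk))

lemma nthPrime_zero : nthPrime 0 = 2 := Nat.nth_prime_zero_eq_two

lemma nthPrime_succ (n : ℕ) : nthPrime (n + 1) = Nat.nth Nat.Prime n := rfl

lemma primePi_mono : Monotone primePi :=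
  Nat.monotone_primeCounting.comp Nat.floor_mono

lemma primePi_intervalIntegrable (a b : ℝ) :
    IntervalIntegrable (fun x => (primePi x : ℝ)) MeasureTheory.volume a b :=
  Monotone.intervalIntegrable fun _ _ h => Nat.cast_le.2 (primePi_mono h)

lemma primePi_eq_of_mem_Ico {n : ℕ} {x : ℝ}
    (hx : x ∈ Set.Ico (nthPrime (n + 1) : ℝ) (nthPrime (n + 2))) : primePi x = n + 1 := by
  have hx0 : 0 ≤ x := (Nat.cast_nonneg _).trans hx.1
  exact Nat.primeCounting_eq_succ_of_nth_le_of_lt (Nat.le_floor hx.1) ((Nat.floor_lt hx0).2 hx.2)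

lemma integral_primePi_nthPrime_succ (n : ℕ) :
    ∫ x in (nthPrime n : ℝ)..(nthPrime (n + 1) : ℝ), (primePi x : ℝ)
      = n * ((nthPrime (n + 1) : ℝ) - nthPrime n) := by
  cases n with
  | zero => simp [nthPrime_zero, nthPrime_succ]
  | succ n =>
    have hle : (nthPrime (n + 1) : ℝ) ≤ nthPrime (n + 2) := by
      exact_mod_cast Nat.nth_monotone Nat.infinite_setOfPred_prime n.le_succ
    rw [intervalIntegral.integral_congr_Ioo_of_le hle (g := fun _ => ((n + 1 : ℕ) : ℝ))
      fun x hx => by simp [primePi_eq_of_mem_Ico (Set.Ioo_subset_Ico_self hx)],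
      intervalIntegral.integral_const, smul_eq_mul, mul_comm]

lemma Cseq_zero : Cseq 0 = 0 := by simp [Cseq]

lemma Cseq_succ (n : ℕ) :
    Cseq (n + 1) = Cseq n + n * ((nthPrime (n + 1) : ℝ) - nthPrime n) := by
  simp only [Cseq, Finset.sum_Icc_succ_top (Nat.le_add_left 1 n)]
  push_cast
  ring

theorem Cseq_eq_integral_primePi_general (n : ℕ) :
    Cseq n = ∫ x in (2:ℝ)..(nthPrime n : ℝ), (primePi x : ℝ) := by
  induction n with
  | zero => simp [Cseq_zero, nthPrime_zero]
  | succ n ih =>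
    rw [Cseq_succ, ih, ← integral_primePi_nthPrime_succ,
      intervalIntegral.integral_add_adjacent_intervals (primePi_intervalIntegrable _ _)
        (primePi_intervalIntegrable _ _)]

theorem Cseq_eq_integral_primePi (n : ℕ) (hn : 1 ≤ n) :
    Cseq n = ∫ x in (2:ℝ)..(nthPrime n : ℝ), (primePi x : ℝ) :=
  Cseq_eq_integral_primePi_general n
end

section
/- For all real numbers r, s with s ≥ r > 1 and every natural number m ≥ 2, ∫_r^s x/(log x)^m dx = (2^{m-2}/(m-1)!)·∫_r^s x/(log x)² dx − Σ_{k=2}^{m-1} (2^{m-1-k}·(k-1)!/(m-1)!)·( s²/(log s)^k − r²/(log r)^k ). -/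
open Filter Asymptotics

/- Since `(x² / log^k x)' = 2x / log^k x - k x / log^(k+1) x`, the integrals `I k = ∫_r^s x / log^k x`
satisfy `k I (k+1) = 2 I k - [x² / log^k x]_r^s`; unrolling this first-order recurrence from `k = 2`
gives the closed form. -/

theorem eq_sub_sum_of_natCast_mul_succ_eq (I B : ℕ → ℝ)
    (hrec : ∀ k : ℕ, 2 ≤ k → (k : ℝ) * I (k + 1) = 2 * I k - B k) (m : ℕ) (hm : 2 ≤ m) :
    ((m - 1).factorial : ℝ) * I m =
      2 ^ (m - 2) * I 2 - ∑ k ∈ Finset.Icc 2 (m - 1), 2 ^ (m - 1 - k) * ((k - 1).factorial : ℝ) * B k := by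
  induction m, hm using Nat.le_induction with
  | base => simp
  | succ m hm ih =>
    have hsum : ∑ k ∈ Finset.Icc 2 m, 2 ^ (m - k) * ((k - 1).factorial : ℝ) * B k =
        2 * ∑ k ∈ Finset.Icc 2 (m - 1), 2 ^ (m - 1 - k) * ((k - 1).factorial : ℝ) * B k
          + ((m - 1).factorial : ℝ) * B m := by
      rw [← Nat.sub_add_cancel (by omega : 1 ≤ m), Finset.sum_Icc_succ_top (by omega), Finset.mul_sum]
      simp only [Nat.add_sub_cancel, Nat.sub_self, pow_zero, one_mul]
      congr 1
      refine Finset.sum_congr rfl fun k hk => ?_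
      rw [show m - 1 + 1 - k = m - 1 - k + 1 by grind, pow_succ]
      ring
    have hfac : (m.factorial : ℝ) = ((m - 1).factorial : ℝ) * m := by
      rw [← Nat.sub_add_cancel (by omega : 1 ≤ m), Nat.factorial_succ]
      push_cast
      ring
    rw [Nat.add_sub_cancel, show m + 1 - 2 = m - 2 + 1 by omega, hsum, hfac, mul_assoc,
      hrec m hm, pow_succ]
    linear_combination 2 * ih

theorem eq_sub_sum_div_of_natCast_mul_succ_eq (I B : ℕ → ℝ)
    (hrec : ∀ k : ℕ, 2 ≤ k → (k : ℝ) * I (k + 1) = 2 * I k - B k) (m : ℕ) (hm : 2 ≤ m) :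
    I m = 2 ^ (m - 2) / ((m - 1).factorial : ℝ) * I 2 -
      ∑ k ∈ Finset.Icc 2 (m - 1), 2 ^ (m - 1 - k) * ((k - 1).factorial : ℝ) / ((m - 1).factorial : ℝ) * B k := by
  have hfac : ((m - 1).factorial : ℝ) ≠ 0 := by positivity
  calc I m = ((m - 1).factorial * I m) / (m - 1).factorial := by field_simp
    _ = _ := by
      rw [eq_sub_sum_of_natCast_mul_succ_eq I B hrec m hm, sub_div, Finset.sum_div]
      congr 1
      · ring
      · exact Finset.sum_congr rfl fun k _ => by ring

theorem hasDerivAt_sq_div_log_pow (k : ℕ) {x : ℝ} (hx : x ≠ 0) (hlog : Real.log x ≠ 0) :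
    HasDerivAt (fun y => y ^ 2 / Real.log y ^ k)
      (2 * (x / Real.log x ^ k) - k * (x / Real.log x ^ (k + 1))) x := by
  have hsq : HasDerivAt (fun y : ℝ => y ^ 2) (2 * x) x := by simpa using hasDerivAt_pow 2 x
  have hpow : HasDerivAt (fun y => Real.log y ^ k) (k * Real.log x ^ (k - 1) * x⁻¹) x :=
    (Real.hasDerivAt_log hx).fun_pow k
  refine (hsq.fun_div hpow (pow_ne_zero k hlog)).congr_deriv ?_
  cases k with
  | zero => simp
  | succ j =>
    rw [Nat.add_sub_cancel]
    field_simp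
    ring

theorem intervalIntegrable_div_log_pow (k : ℕ) {r s : ℝ} (hr : 1 < r) (hs : 1 < s) :
    IntervalIntegrable (fun x => x / Real.log x ^ k) MeasureTheory.volume r s := by
  have hlog : ∀ x ∈ Set.uIcc r s, Real.log x ≠ 0 := fun x hx =>
    (Real.log_pos ((lt_min hr hs).trans_le hx.1)).ne'
  refine (continuousOn_id.div (ContinuousOn.pow ?_ k) fun x hx => pow_ne_zero k (hlog x hx)).intervalIntegrable
  exact Real.continuousOn_log.mono fun x hx h => hlog x hx (by simp [Set.mem_singleton_iff.mp h])

theorem natCast_mul_integral_div_log_pow_succ (k : ℕ) {r s : ℝ} (hr : 1 < r) (hs : 1 < s) :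
    k * ∫ x in r..s, x / Real.log x ^ (k + 1) =
      2 * (∫ x in r..s, x / Real.log x ^ k) - (s ^ 2 / Real.log s ^ k - r ^ 2 / Real.log r ^ k) := by
  have hI := (intervalIntegrable_div_log_pow k hr hs).const_mul 2
  have hI' := (intervalIntegrable_div_log_pow (k + 1) hr hs).const_mul (k : ℝ)
  have hFTC := intervalIntegral.integral_eq_sub_of_hasDerivAt (f := fun x => x ^ 2 / Real.log x ^ k) (fun x hx => ?_) (hI.sub hI')
  · rw [← hFTC, intervalIntegral.integral_sub hI hI', intervalIntegral.integral_const_mul,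
      intervalIntegral.integral_const_mul]
    ring
  · have hx1 : 1 < x := (lt_min hr hs).trans_le hx.1
    exact hasDerivAt_sq_div_log_pow k (by positivity) (Real.log_pos hx1).ne'

theorem integral_div_log_pow (r s : ℝ) (hr : 1 < r) (hs : r ≤ s) (m : ℕ) (hm : 2 ≤ m) :
    ∫ x in r..s, x / Real.log x ^ m =
      (2 ^ (m - 2) / ((m - 1).factorial : ℝ)) * (∫ x in r..s, x / Real.log x ^ 2)
        - ∑ k ∈ Finset.Icc 2 (m - 1), (2 ^ (m - 1 - k) * ((k - 1).factorial : ℝ) / ((m - 1).factorial : ℝ))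
            * (s ^ 2 / Real.log s ^ k - r ^ 2 / Real.log r ^ k) :=
  eq_sub_sum_div_of_natCast_mul_succ_eq (fun k => ∫ x in r..s, x / Real.log x ^ k)
    (fun k => s ^ 2 / Real.log s ^ k - r ^ 2 / Real.log r ^ k)
    (fun k _ => natCast_mul_integral_div_log_pow_succ k hr (hr.trans_le hs)) m hm
end

section
/- For every real number x ≥ 4171, ∫_2^x dt/log t ≥ x/log x + x/(log x)² + 2x/(log x)³ + 6x/(log x)⁴ + 24x/(log x)⁵ + 120x/(log x)⁶ + 720x/(log x)⁷ + 5040x/(log x)⁸ − 1.046. -/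
open Filter Asymptotics

/-!
Split the integral at 4171. On `[2, 4171]` compare with the truncated Ramanujan–Soldner series
`log log t + ∑_{n ≤ N} (log t)ⁿ / (n · n!)`: its derivative is `(∑_{i ≤ N} Lⁱ / i!) / (t L)` with
`L = log t`, which is at most `e^L / (t L) = 1 / L`. On `[4171, x]` compare with the truncated
asymptotic expansion `∑_{k < 8} k! t / L^(k+1)`, whose derivative telescopes to `1 / L - 8! / L⁹`.
The constant `-1.046` is what remains of the two boundary values at 4171 and at 2, evaluated with
Padé-type lower bounds for the logarithm.
-/

open Real Set MeasureTheory intervalIntegral Finset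
open scoped Nat

lemma sub_le_integral_of_hasDerivAt_of_le {f f' g : ℝ → ℝ} {a b : ℝ} (hab : a ≤ b)
    (hf : ∀ t ∈ Icc a b, HasDerivAt f (f' t) t) (hg : ContinuousOn g (Icc a b))
    (hle : ∀ t ∈ Ioo a b, f' t ≤ g t) : f b - f a ≤ ∫ t in a..b, g t :=
  sub_le_integral_of_hasDeriv_right_of_le hab
    (fun t ht => (hf t ht).continuousAt.continuousWithinAt)
    (fun t ht => (hf t (Ioo_subset_Icc_self ht)).hasDerivWithinAt)
    (hg.integrableOn_Icc) hle

lemma pade_le_log {x : ℝ} (hx : 1 ≤ x) : 3 * (x ^ 2 - 1) / (x ^ 2 + 4 * x + 1) ≤ log x := by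
  have hderiv : ∀ t ∈ Icc 1 x, HasDerivAt (fun s : ℝ => 3 * (s ^ 2 - 1) / (s ^ 2 + 4 * s + 1))
      (12 * (t ^ 2 + t + 1) / (t ^ 2 + 4 * t + 1) ^ 2) t := by
    intro t ht
    have hden : t ^ 2 + 4 * t + 1 ≠ 0 := by nlinarith [ht.1]
    have hnum : HasDerivAt (fun s : ℝ => 3 * (s ^ 2 - 1)) (6 * t) t :=
      (((hasDerivAt_pow 2 t).sub_const 1).const_mul 3).congr_deriv (by norm_num; ring)
    have hden' : HasDerivAt (fun s : ℝ => s ^ 2 + 4 * s + 1) (2 * t + 4) t :=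
      (((hasDerivAt_pow 2 t).add ((hasDerivAt_id t).const_mul 4)).add_const 1).congr_deriv
        (by norm_num)
    refine (hnum.div hden' hden).congr_deriv ?_
    field_simp
    ring
  have hcont : ContinuousOn (fun t : ℝ => t⁻¹) (Icc 1 x) :=
    continuousOn_inv₀.mono fun t ht => (zero_lt_one.trans_le ht.1).ne'
  have h := sub_le_integral_of_hasDerivAt_of_le hx hderiv hcont fun t ht => by
    have ht1 : 1 < t := ht.1
    rw [inv_eq_one_div, div_le_div_iff₀ (by positivity) (by positivity)]
    -- `1 / t - 12 (t² + t + 1) / (t² + 4t + 1)² = (t - 1)⁴ / (t (t² + 4t + 1)²)`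
    nlinarith [pow_two_nonneg ((t - 1) ^ 2)]
  rw [integral_inv_of_pos one_pos (by linarith), div_one] at h
  simpa using h

lemma le_log_two_pow_mul (n : ℕ) {y : ℝ} (hy : 1 ≤ y) :
    n * 0.6931471803 + 3 * (y ^ 2 - 1) / (y ^ 2 + 4 * y + 1) ≤ log (2 ^ n * y) := by
  rw [log_mul (by positivity) (by positivity), log_pow]
  gcongr
  · exact log_two_gt_d9.le
  · exact pade_le_log hy

lemma log_4171_ge : 8.335911 ≤ log 4171 := by
  have h := le_log_two_pow_mul 12 (y := 4171 / 4096) (by norm_num)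
  norm_num at h
  linarith

lemma log_log_4171_ge : 2.1205 ≤ log (log 4171) := by
  have h := le_log_two_pow_mul 3 (y := 8.335911 / 8) (by norm_num)
  norm_num at h
  linarith [log_le_log (by norm_num) log_4171_ge]

lemma log_log_two_le : log (log 2) ≤ -0.3664 := by
  have h := pade_le_log (x := 0.6931471808⁻¹) (by norm_num)
  rw [log_inv] at h
  norm_num at h
  linarith [log_le_log (log_pos one_lt_two) log_two_lt_d9.le]

/-- `li x = γ + liSeries ∞ x` (Ramanujan–Soldner); the constant `γ` cancels in differences. -/
noncomputable def liSeries (N : ℕ) (x : ℝ) : ℝ :=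
  log (log x) + ∑ n ∈ range N, log x ^ (n + 1) / ((n + 1) * (n + 1)! : ℝ)

noncomputable def liAsymptotic (N : ℕ) (x : ℝ) : ℝ :=
  ∑ k ∈ range N, k ! * x / log x ^ (k + 1)

lemma hasDerivAt_liSeries (N : ℕ) {t : ℝ} (ht : 1 < t) :
    HasDerivAt (liSeries N) ((∑ i ∈ range (N + 1), log t ^ i / i !) / (t * log t)) t := by
  have ht0 : t ≠ 0 := by positivity
  have hL : log t ≠ 0 := (log_pos ht).ne'
  have hlog := hasDerivAt_log ht0
  have hterm : ∀ n : ℕ, HasDerivAt (fun s => log s ^ (n + 1) / ((n + 1) * (n + 1)! : ℝ))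
      (log t ^ (n + 1) / (n + 1)! / (t * log t)) t := fun n =>
    ((hlog.pow (n + 1)).div_const _).congr_deriv
      (by push_cast [Nat.factorial_succ]; field_simp; ring)
  refine (((hasDerivAt_log hL).comp t hlog).add
    (HasDerivAt.fun_sum fun n _ => hterm n)).congr_deriv ?_
  rw [sum_range_succ', add_div, sum_div]
  field_simp
  simp only [Nat.factorial_zero, Nat.cast_one, mul_one]
  ring

lemma hasDerivAt_liAsymptotic (N : ℕ) {t : ℝ} (ht : 1 < t) :
    HasDerivAt (liAsymptotic N) (1 / log t - N ! / log t ^ (N + 1)) t := by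
  have ht0 : t ≠ 0 := by positivity
  have hL : log t ≠ 0 := (log_pos ht).ne'
  have hterm : ∀ k : ℕ, HasDerivAt (fun s => k ! * s / log s ^ (k + 1))
      (k ! / log t ^ (k + 1) - (k + 1)! / log t ^ (k + 1 + 1)) t := fun k =>
    (((hasDerivAt_id t).const_mul (k ! : ℝ)).div ((hasDerivAt_log ht0).pow (k + 1))
      (pow_ne_zero _ hL)).congr_deriv
      (by simp only [Pi.pow_apply, id_eq]; push_cast [Nat.factorial_succ]; field_simp; ring)
  have hsum := HasDerivAt.fun_sum (u := range N) fun k _ => hterm k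
  rwa [sum_range_sub' (fun k => (k ! : ℝ) / log t ^ (k + 1)), Nat.factorial_zero, Nat.cast_one,
    zero_add, pow_one] at hsum

lemma continuousOn_one_div_log {a b : ℝ} (ha : 1 < a) :
    ContinuousOn (fun t => 1 / log t) (Icc a b) :=
  continuousOn_const.div (continuousOn_log.mono fun t ht => by
    simp only [mem_compl_iff, mem_singleton_iff]; linarith [ht.1])
    fun t ht => (log_pos (ha.trans_le ht.1)).ne'

lemma liSeries_sub_le_integral (N : ℕ) {a b : ℝ} (ha : 1 < a) (hab : a ≤ b) :
    liSeries N b - liSeries N a ≤ ∫ t in a..b, 1 / log t := by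
  refine sub_le_integral_of_hasDerivAt_of_le hab
    (fun t ht => hasDerivAt_liSeries N (ha.trans_le ht.1)) (continuousOn_one_div_log ha)
    fun t ht => ?_
  have ht : 1 < t := ha.trans ht.1
  have hL : 0 < log t := log_pos ht
  calc (∑ i ∈ range (N + 1), log t ^ i / i !) / (t * log t)
      ≤ exp (log t) / (t * log t) := by gcongr; exact sum_le_exp_of_nonneg hL.le _
    _ = 1 / log t := by rw [exp_log (by positivity)]; field_simp

lemma liAsymptotic_sub_le_integral (N : ℕ) {a b : ℝ} (ha : 1 < a) (hab : a ≤ b) :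
    liAsymptotic N b - liAsymptotic N a ≤ ∫ t in a..b, 1 / log t :=
  sub_le_integral_of_hasDerivAt_of_le hab
    (fun t ht => hasDerivAt_liAsymptotic N (ha.trans_le ht.1)) (continuousOn_one_div_log ha)
    fun t ht => sub_le_self _ (by have := log_pos (ha.trans ht.1); positivity)

lemma intervalIntegrable_one_div_log {a b : ℝ} (ha : 1 < a) (hab : a ≤ b) :
    IntervalIntegrable (fun t => 1 / log t) volume a b :=
  (continuousOn_one_div_log ha).intervalIntegrable_of_Icc hab

-- With 24 terms of the series, about `4 · 10⁻⁴` of the `1.046` is left unused.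
lemma liAsymptotic_sub_le_liSeries_sub :
    liAsymptotic 8 4171 - 1.046 ≤ liSeries 24 4171 - liSeries 24 2 := by
  have hL := log_4171_ge
  have hasymp : liAsymptotic 8 4171 ≤ ∑ k ∈ range 8, k ! * 4171 / (8.335911 : ℝ) ^ (k + 1) :=
    sum_le_sum fun k _ => by gcongr
  have hseries : ∑ n ∈ range 24, (8.335911 : ℝ) ^ (n + 1) / ((n + 1) * (n + 1)! : ℝ) ≤
      ∑ n ∈ range 24, log 4171 ^ (n + 1) / ((n + 1) * (n + 1)! : ℝ) :=
    sum_le_sum fun n _ => by gcongr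
  have hseries₂ : ∑ n ∈ range 24, log 2 ^ (n + 1) / ((n + 1) * (n + 1)! : ℝ) ≤
      ∑ n ∈ range 24, (0.6931471808 : ℝ) ^ (n + 1) / ((n + 1) * (n + 1)! : ℝ) :=
    sum_le_sum fun n _ => by gcongr; exact log_two_lt_d9.le
  have hasymp_val : ∑ k ∈ range 8, k ! * 4171 / (8.335911 : ℝ) ^ (k + 1) ≤ 585.92932 := by
    norm_num [sum_range_succ, Nat.factorial]
  have hseries_val :
      583.23127 ≤ ∑ n ∈ range 24, (8.335911 : ℝ) ^ (n + 1) / ((n + 1) * (n + 1)! : ℝ) := by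
    norm_num [sum_range_succ, Nat.factorial]
  have hseries₂_val :
      ∑ n ∈ range 24, (0.6931471808 : ℝ) ^ (n + 1) / ((n + 1) * (n + 1)! : ℝ) ≤ 0.834462 := by
    norm_num [sum_range_succ, Nat.factorial]
  unfold liSeries
  linarith [log_log_4171_ge, log_log_two_le]

theorem li_lower_bound (x : ℝ) (hx : 4171 ≤ x) :
    (∫ t in (2:ℝ)..x, 1 / Real.log t) ≥
      x / Real.log x + x / Real.log x ^ 2 + 2 * x / Real.log x ^ 3 + 6 * x / Real.log x ^ 4
        + 24 * x / Real.log x ^ 5 + 120 * x / Real.log x ^ 6 + 720 * x / Real.log x ^ 7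
        + 5040 * x / Real.log x ^ 8 - 1.046 := by
  have h2 : (2 : ℝ) ≤ 4171 := by norm_num
  have h4171 : (1 : ℝ) < 4171 := by norm_num
  have hsplit := integral_add_adjacent_intervals
    (intervalIntegrable_one_div_log one_lt_two h2) (intervalIntegrable_one_div_log h4171 hx)
  have hseries := liSeries_sub_le_integral 24 one_lt_two h2
  have hasymp := liAsymptotic_sub_le_integral 8 h4171 hx
  have hjunction := liAsymptotic_sub_le_liSeries_sub
  have hexpand : liAsymptotic 8 x = x / log x + x / log x ^ 2 + 2 * x / log x ^ 3
      + 6 * x / log x ^ 4 + 24 * x / log x ^ 5 + 120 * x / log x ^ 6 + 720 * x / log x ^ 7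
      + 5040 * x / log x ^ 8 := by
    simp [liAsymptotic, sum_range_succ, Nat.factorial]
  linarith
end

section
/- For every real number x ≥ 10^16, ∫_2^x dt/log t ≤ x/log x + x/(log x)² + 2x/(log x)³ + 6x/(log x)⁴ + 24x/(log x)⁵ + 120x/(log x)⁶ + 900x/(log x)⁷. -/
open Filter Asymptotics

/-!
Writing `L = log t`, the right-hand side `liMajorant t` has derivative `1 / L + liDefect L` with
`liDefect u = 180 / u ^ 7 - 6300 / u ^ 8`: the terms of the truncated asymptotic series of `li`
telescope, and the coefficient `900` in place of `6! = 720` leaves the defect. Hence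
`∫₂ˣ dt / log t = liMajorant x - liMajorant 2 - ∫₂ˣ liDefect (log t) dt`, and since
`liMajorant 2 > 0` it suffices that the last integral is nonnegative. The defect is negative for
`u < 35` but increasing on `(0, 40]`, so a lower step sum over explicit breakpoints shows that its
integral up to `10 ^ 16` is positive; beyond `10 ^ 16 > e ^ 35` the integrand is nonnegative.
-/

open Real Set Finset intervalIntegral MeasureTheory

noncomputable def liDefect (u : ℝ) : ℝ := 180 / u ^ 7 - 6300 / u ^ 8

noncomputable def liMajorant (t : ℝ) : ℝ :=
  t / log t + t / log t ^ 2 + 2 * t / log t ^ 3 + 6 * t / log t ^ 4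
    + 24 * t / log t ^ 5 + 120 * t / log t ^ 6 + 900 * t / log t ^ 7

theorem hasDerivAt_mul_div_log_pow (c : ℝ) (k : ℕ) {t : ℝ} (ht : 1 < t) :
    HasDerivAt (fun s => c * s / log s ^ (k + 1))
      (c / log t ^ (k + 1) - (k + 1) * c / log t ^ (k + 2)) t := by
  have hlog : log t ≠ 0 := (log_pos ht).ne'
  have ht0 : t ≠ 0 := by positivity
  refine (((hasDerivAt_id t).const_mul c).div ((hasDerivAt_log ht0).pow (k + 1))
    (pow_ne_zero _ hlog)).congr_deriv ?_
  simp only [id, Pi.pow_apply, Nat.add_sub_cancel, Nat.cast_add, Nat.cast_one]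
  field_simp
  ring

theorem hasDerivAt_liMajorant {t : ℝ} (ht : 1 < t) :
    HasDerivAt liMajorant (1 / log t + liDefect (log t)) t := by
  have hlog : log t ≠ 0 := (log_pos ht).ne'
  have h := ((((((hasDerivAt_mul_div_log_pow 1 0 ht).add
    (hasDerivAt_mul_div_log_pow 1 1 ht)).add (hasDerivAt_mul_div_log_pow 2 2 ht)).add
    (hasDerivAt_mul_div_log_pow 6 3 ht)).add (hasDerivAt_mul_div_log_pow 24 4 ht)).add
    (hasDerivAt_mul_div_log_pow 120 5 ht)).add (hasDerivAt_mul_div_log_pow 900 6 ht)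
  refine (h.congr_deriv ?_).congr_of_eventuallyEq (Filter.Eventually.of_forall fun s => ?_)
  · simp only [liDefect]; push_cast; field_simp; ring
  · simp only [liMajorant, Pi.add_apply]; ring

theorem hasDerivAt_liDefect {u : ℝ} (hu : u ≠ 0) :
    HasDerivAt liDefect ((50400 - 1260 * u) / u ^ 9) u := by
  have h := ((hasDerivAt_pow 7 u).fun_inv (pow_ne_zero 7 hu)).const_mul 180 |>.sub
    (((hasDerivAt_pow 8 u).fun_inv (pow_ne_zero 8 hu)).const_mul 6300)
  refine (h.congr_deriv ?_).congr_of_eventuallyEq (Filter.Eventually.of_forall fun v => ?_)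
  · field_simp; ring
  · simp [liDefect, div_eq_mul_inv]

theorem monotoneOn_liDefect : MonotoneOn liDefect (Ioc 0 40) := by
  refine monotoneOn_of_deriv_nonneg (convex_Ioc 0 40) ?_ ?_ ?_
  · exact fun u hu => (hasDerivAt_liDefect hu.1.ne').continuousAt.continuousWithinAt
  · intro u hu
    rw [interior_Ioc] at hu
    exact (hasDerivAt_liDefect hu.1.ne').differentiableAt.differentiableWithinAt
  · intro u hu
    rw [interior_Ioc] at hu
    rw [(hasDerivAt_liDefect hu.1.ne').deriv]
    exact div_nonneg (by linarith [hu.2]) (pow_nonneg hu.1.le 9)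

theorem liDefect_nonneg {u : ℝ} (hu : 35 ≤ u) : 0 ≤ liDefect u := by
  have hu0 : 0 < u := by linarith
  rw [liDefect, sub_nonneg, div_le_div_iff₀ (by positivity) (by positivity)]
  nlinarith [pow_pos hu0 7]

theorem continuousOn_liDefect_log : ContinuousOn (fun t => liDefect (log t)) (Ioi 1) := by
  intro t ht
  have hlog : log t ≠ 0 := (log_pos ht).ne'
  exact ((hasDerivAt_liDefect hlog).continuousAt.comp
    (continuousAt_log (by linarith [mem_Ioi.1 ht]))).continuousWithinAt

theorem continuousOn_inv_log : ContinuousOn (fun t => 1 / log t) (Ioi 1) :=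
  continuousOn_const.div (continuousOn_log.mono fun _ ht => ne_of_gt (zero_lt_one.trans ht))
    fun _ ht => (log_pos ht).ne'

theorem intervalIntegrable_of_continuousOn_Ioi {f : ℝ → ℝ} {a b c : ℝ}
    (hf : ContinuousOn f (Ioi c)) (ha : c < a) (hb : c < b) :
    IntervalIntegrable f volume a b :=
  (hf.mono fun _ ht => (lt_min ha hb).trans_le ht.1).intervalIntegrable

theorem sum_mul_sub_le_integral {f : ℝ → ℝ} {x m : ℕ → ℝ} {n : ℕ}
    (hx : ∀ i < n, x i ≤ x (i + 1))
    (hf : ∀ i < n, IntervalIntegrable f volume (x i) (x (i + 1)))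
    (hm : ∀ i < n, ∀ t ∈ Icc (x i) (x (i + 1)), m i ≤ f t) :
    ∑ i ∈ range n, m i * (x (i + 1) - x i) ≤ ∫ t in x 0..x n, f t := by
  rw [← sum_integral_adjacent_intervals hf]
  refine sum_le_sum fun i hi => ?_
  have hi := mem_range.1 hi
  calc m i * (x (i + 1) - x i) = ∫ _ in x i..x (i + 1), m i := by simp [mul_comm]
    _ ≤ ∫ t in x i..x (i + 1), f t :=
      integral_mono_on (hx i hi) intervalIntegrable_const (hf i hi) (hm i hi)

theorem le_log_of_pow_le {a : ℝ} {p q : ℕ} (hq : 0 < q) (ha : 0 < a)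
    (h : (2.7182818286 : ℝ) ^ p ≤ a ^ q) : (p / q : ℝ) ≤ log a := by
  rw [le_log_iff_exp_le ha]
  refine le_of_pow_le_pow_left₀ hq.ne' ha.le ?_
  calc exp (p / q) ^ q = exp 1 ^ p := by
        rw [← exp_nat_mul, ← exp_nat_mul]; field_simp
    _ ≤ 2.7182818286 ^ p := pow_le_pow_left₀ (exp_pos 1).le exp_one_lt_d9.le p
    _ ≤ a ^ q := h

theorem log_le_forty {t : ℝ} (ht : 0 < t) (h : t ≤ 10 ^ 16) : log t ≤ 40 := by
  rw [log_le_iff_le_exp ht]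
  calc t ≤ 2.7182818283 ^ 40 := h.trans (by norm_num)
    _ ≤ exp 1 ^ 40 := pow_le_pow_left₀ (by norm_num) exp_one_gt_d9.le 40
    _ = exp 40 := by rw [← exp_nat_mul]; norm_num

theorem sum_le_integral_liDefect_log {x : ℕ → ℝ} {p q : ℕ → ℕ} {n : ℕ}
    (h : ∀ i < n, 1 < x i ∧ x i ≤ x (i + 1) ∧ x (i + 1) ≤ 10 ^ 16 ∧ 0 < p i ∧ 0 < q i ∧
      (2.7182818286 : ℝ) ^ p i ≤ x i ^ q i) :
    ∑ i ∈ range n, liDefect (p i / q i) * (x (i + 1) - x i) ≤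
      ∫ t in x 0..x n, liDefect (log t) := by
  refine sum_mul_sub_le_integral (fun i hi => (h i hi).2.1) (fun i hi => ?_)
    fun i hi t ht => ?_
  · obtain ⟨h1, h2, -⟩ := h i hi
    exact intervalIntegrable_of_continuousOn_Ioi continuousOn_liDefect_log h1
      (h1.trans_le h2)
  · obtain ⟨h1, -, h3, hp, hq, hpq⟩ := h i hi
    have hℓt : (p i / q i : ℝ) ≤ log t :=
      (le_log_of_pow_le hq (by linarith) hpq).trans (log_le_log (by linarith) ht.1)
    have ht40 : log t ≤ 40 := log_le_forty (by linarith [ht.1]) (ht.2.trans h3)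
    have hℓ : (0 : ℝ) < p i / q i := by positivity
    exact monotoneOn_liDefect ⟨hℓ, hℓt.trans ht40⟩ ⟨hℓ.trans_le hℓt, ht40⟩ hℓt

/-- Breakpoints `x` with `e ^ (p / q) ≤ x`; the lower step sum they give is about `1787`. -/
def liBreakpoints : List (ℝ × ℕ × ℕ) :=
  [(2, 9, 13), (2.8, 1, 1), (4.5, 3, 2), (34, 7, 2), (14000, 19, 2), (6.6e7, 18, 1),
    (2.7e10, 24, 1), (8.8e11, 55, 2), (6.5e12, 59, 2), (3e13, 31, 1), (7.9e13, 32, 1),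
    (2.2e14, 33, 1), (5.9e14, 34, 1), (9.7e14, 69, 2), (1.6e15, 35, 1), (2.7e15, 71, 2),
    (4.4e15, 36, 1), (7.2e15, 73, 2), (1e16, 73, 2)]

theorem integral_liDefect_log_nonneg : 0 ≤ ∫ t in (2 : ℝ)..10 ^ 16, liDefect (log t) := by
  have h := sum_le_integral_liDefect_log (n := 18)
    (x := fun i => (liBreakpoints.getD i (0, 0, 1)).1)
    (p := fun i => (liBreakpoints.getD i (0, 0, 1)).2.1)
    (q := fun i => (liBreakpoints.getD i (0, 0, 1)).2.2) (fun i hi => by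
      interval_cases i <;> norm_num [liBreakpoints])
  refine (le_trans ?_ h).trans_eq ?_
  · norm_num [liBreakpoints, sum_range_succ, liDefect]
  · norm_num [liBreakpoints]

theorem integral_liDefect_log_nonneg_of_le {x : ℝ} (hx : 10 ^ 16 ≤ x) :
    0 ≤ ∫ t in (2 : ℝ)..x, liDefect (log t) := by
  have h1 : (1 : ℝ) < 10 ^ 16 := by norm_num
  have hδ := continuousOn_liDefect_log
  rw [← integral_add_adjacent_intervals (intervalIntegrable_of_continuousOn_Ioi hδ one_lt_two h1)
    (intervalIntegrable_of_continuousOn_Ioi hδ h1 (h1.trans_le hx))]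
  refine add_nonneg integral_liDefect_log_nonneg (integral_nonneg hx fun t ht => ?_)
  have h35 : ((35 : ℕ) / (1 : ℕ) : ℝ) ≤ log (10 ^ 16) :=
    le_log_of_pow_le one_pos (by norm_num) (by norm_num)
  rw [Nat.cast_ofNat, Nat.cast_one, div_one] at h35
  exact liDefect_nonneg (h35.trans (log_le_log (by norm_num) ht.1))

theorem li_upper_bound_1e16 (x : ℝ) (hx : 10 ^ 16 ≤ x) :
    (∫ t in (2:ℝ)..x, 1 / Real.log t) ≤
      x / Real.log x + x / Real.log x ^ 2 + 2 * x / Real.log x ^ 3 + 6 * x / Real.log x ^ 4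
        + 24 * x / Real.log x ^ 5 + 120 * x / Real.log x ^ 6 + 900 * x / Real.log x ^ 7 := by
  have h2x : (2 : ℝ) ≤ x := le_trans (by norm_num) hx
  have h1x : (1 : ℝ) < x := one_lt_two.trans_le h2x
  have hinv := intervalIntegrable_of_continuousOn_Ioi continuousOn_inv_log one_lt_two h1x
  have hdefect := intervalIntegrable_of_continuousOn_Ioi continuousOn_liDefect_log one_lt_two h1x
  have hftc : ∫ t in (2 : ℝ)..x, (1 / log t + liDefect (log t)) = liMajorant x - liMajorant 2 :=
    integral_eq_sub_of_hasDerivAt (fun t ht => hasDerivAt_liMajorant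
      (one_lt_two.trans_le (uIcc_of_le h2x ▸ ht).1)) (hinv.add hdefect)
  rw [integral_add hinv hdefect] at hftc
  have hmajorant : 0 < liMajorant 2 := by unfold liMajorant; positivity
  have := integral_liDefect_log_nonneg_of_le hx
  change _ ≤ liMajorant x
  linarith
end
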